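/- Let b ≥ 2 and n ≥ 1 be integers, let R_n be a generalized Hammersley point set with discrepancy function D, and let j₁, j₂ ∈ ℕ₀ with j₁ ≥ n or j₂ ≥ n, m₁ ∈ {0,…,b^{j₁}−1}, m₂ ∈ {0,…,b^{j₂}−1}, ℓ₁, ℓ₂ ∈ {1,…,b−1}. Then |∫_{[0,1)²} D(x₁,x₂)·h_{j₁,m₁,ℓ₁}(x₁)·h_{j₂,m₂,ℓ₂}(x₂) dx₁dx₂| = b^{−2j₁−2j₂−2} / (|exp(2πiℓ₁/b) − 1|·|exp(2πiℓ₂/b) − 1|). -/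

import Mathlib

open scoped Classical
open Finset MeasureTheory

/-- `bexp b ℓ k = exp(2πiℓk/b)`. -/
noncomputable def bexp (b ℓ k : ℕ) : ℂ :=
  Complex.exp (2 * Real.pi * Complex.I * ℓ * k / b)

/-- The `b`-adic Haar function `h_{j,m,ℓ}` on `[0,1)`. -/
noncomputable def haar (b j m ℓ : ℕ) (x : ℝ) : ℂ :=
  ∑ k ∈ Finset.range b,
    if ((b:ℝ)^(j+1))⁻¹ * ((b:ℝ)*m + k) ≤ x ∧ x < ((b:ℝ)^(j+1))⁻¹ * ((b:ℝ)*m + k + 1)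
    then bexp b ℓ k else 0

/-- First coordinate of the generalized Hammersley point: `z₁ = tₙ/b + ⋯ + t₁/bⁿ`. -/
noncomputable def z1 (b n : ℕ) (t : Fin n → Fin b) : ℝ :=
  ∑ i : Fin n, ((t i : ℕ) : ℝ) / (b:ℝ) ^ (n - (i:ℕ))

/-- Second coordinate: `z₂ = s₁(t₁)/b + s₂(t₂)/b² + ⋯ + sₙ(tₙ)/bⁿ`. -/
noncomputable def z2 (b n : ℕ) (s : Fin n → ℕ → ℕ) (t : Fin n → Fin b) : ℝ :=
  ∑ i : Fin n, ((s i (t i : ℕ) : ℕ) : ℝ) / (b:ℝ) ^ ((i:ℕ) + 1)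

/-- Each `s i` is either the identity or the reflection `t ↦ b−1−t` on digits. -/
def IsDigitMaps (b n : ℕ) (s : Fin n → ℕ → ℕ) : Prop :=
  ∀ i, (∀ k, k < b → s i k = k) ∨ (∀ k, k < b → s i k = b - 1 - k)

/-- The discrepancy function of the generalized Hammersley point set. -/
noncomputable def disc (b n : ℕ) (s : Fin n → ℕ → ℕ) (x₁ x₂ : ℝ) : ℝ :=
  (b:ℝ) ^ (-(n:ℤ)) *
      ∑ t : Fin n → Fin b,
        (if z1 b n t < x₁ then (1:ℝ) else 0) * (if z2 b n s t < x₂ then (1:ℝ) else 0)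
    - x₁ * x₂

/-!
The discrepancy function is a sum of `bⁿ + 1` products of a function of `x₁` and a function
of `x₂`, so its Haar coefficient splits as
`b⁻ⁿ ∑ₜ ⟨1[z₁(t) < ·], h₁⟩ ⟨1[z₂(t) < ·], h₂⟩ − ⟨x, h₁⟩ ⟨x, h₂⟩`.
Both coordinates of every point are multiples of `b⁻ⁿ`, hence of `b⁻ʲ` when `j ≥ n`; a step
function jumping only at such a point is a.e. constant on the support `I_{j,m}` of `h_{j,m,ℓ}`,
and `h_{j,m,ℓ}` has mean zero because `∑_{k<b} ωᵏ = 0` for the `b`-th root of unity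
`ω = e^{2πiℓ/b} ≠ 1`. Hence for `j₁ ≥ n` or `j₂ ≥ n` every point term vanishes, and
`⟨x, h_{j,m,ℓ}⟩ = b^{-2j-1} / (ω − 1)` follows from `∑_{k<b} k ωᵏ = b / (ω − 1)`.
-/

section RootOfUnity

variable {K : Type*} [Field K] {ω : K} {N : ℕ}

lemma sub_one_mul_sum_range_mul_pow (ω : K) (N : ℕ) :
    (ω - 1) * ∑ k ∈ range N, (k : K) * ω ^ k = N * ω ^ N - ∑ k ∈ range (N + 1), ω ^ k + 1 := by
  induction N with
  | zero => simp
  | succ N ih =>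
    rw [sum_range_succ, sum_range_succ (fun k => ω ^ k) (N + 1)]
    push_cast
    linear_combination ih

lemma geom_sum_eq_zero_of_pow_eq_one (hω : ω ^ N = 1) (hω1 : ω ≠ 1) :
    ∑ k ∈ range N, ω ^ k = 0 := by
  rw [geom_sum_eq hω1, hω, sub_self, zero_div]

lemma sum_range_mul_pow_of_pow_eq_one (hω : ω ^ N = 1) (hω1 : ω ≠ 1) :
    ∑ k ∈ range N, (k : K) * ω ^ k = N / (ω - 1) := by
  have h := sub_one_mul_sum_range_mul_pow ω N
  rw [sum_range_succ, geom_sum_eq_zero_of_pow_eq_one hω hω1, hω] at h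
  rw [eq_div_iff (sub_ne_zero.mpr hω1), mul_comm, h]
  ring

end RootOfUnity

lemma bexp_eq_pow (b ℓ k : ℕ) : bexp b ℓ k = bexp b ℓ 1 ^ k := by
  rw [bexp, bexp, ← Complex.exp_nat_mul]
  congr 1
  push_cast
  ring

lemma bexp_one (b ℓ : ℕ) : bexp b ℓ 1 = Complex.exp (2 * Real.pi * Complex.I * ℓ / b) := by
  simp [bexp]

lemma bexp_one_pow_self {b : ℕ} (hb : b ≠ 0) (ℓ : ℕ) : bexp b ℓ 1 ^ b = 1 := by
  rw [← bexp_eq_pow, bexp, mul_assoc _ (ℓ : ℂ), ← Nat.cast_mul,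
    Complex.exp_two_pi_mul_I_mul_div_eq_one_iff hb]
  exact dvd_mul_left b ℓ

lemma bexp_one_ne_one {b ℓ : ℕ} (hb : b ≠ 0) (hℓ : ¬ b ∣ ℓ) : bexp b ℓ 1 ≠ 1 := by
  rwa [bexp_one, Ne, Complex.exp_two_pi_mul_I_mul_div_eq_one_iff hb]

def adicInterval (b j m : ℕ) : Set ℝ := Set.Ico (m / (b : ℝ) ^ j) ((m + 1) / (b : ℝ) ^ j)

lemma measurableSet_adicInterval {b j m : ℕ} : MeasurableSet (adicInterval b j m) :=
  measurableSet_Ico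

lemma adicInterval_child_subset {b : ℕ} (j m : ℕ) {k : ℕ} (hk : k < b) :
    adicInterval b (j + 1) (b * m + k) ⊆ adicInterval b j m := by
  have hb : (0 : ℝ) < b := Nat.cast_pos.mpr (by omega)
  have hbj : (0 : ℝ) < (b : ℝ) ^ j := pow_pos hb j
  have hk' : (k : ℝ) + 1 ≤ b := by exact_mod_cast hk
  apply Set.Ico_subset_Ico
  · rw [div_le_div_iff₀ hbj (pow_pos hb _), pow_succ]
    push_cast
    nlinarith [k.cast_nonneg (α := ℝ)]
  · rw [div_le_div_iff₀ (pow_pos hb _) hbj, pow_succ]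
    push_cast
    nlinarith

lemma adicInterval_subset_Ico {b j m : ℕ} (hm : m < b ^ j) :
    adicInterval b j m ⊆ Set.Ico 0 1 := by
  have hbj : (0 : ℝ) < (b : ℝ) ^ j := by exact_mod_cast (by omega : 0 < b ^ j)
  have hm' : (m : ℝ) + 1 ≤ (b : ℝ) ^ j := by exact_mod_cast hm
  exact Set.Ico_subset_Ico (by positivity) ((div_le_one hbj).mpr hm')

lemma volume_real_adicInterval (b j m : ℕ) :
    volume.real (adicInterval b j m) = 1 / (b : ℝ) ^ j := by
  rw [adicInterval, Real.volume_real_Ico, ← sub_div, add_sub_cancel_left]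
  exact max_eq_left (by positivity)

lemma integral_id_adicInterval (b j m : ℕ) :
    ∫ x in adicInterval b j m, x = (2 * m + 1) / (2 * (b : ℝ) ^ (2 * j)) := by
  have hle : (m : ℝ) / (b : ℝ) ^ j ≤ (m + 1) / (b : ℝ) ^ j := by gcongr; linarith
  rw [adicInterval, integral_Ico_eq_integral_Ioo, ← integral_Ioc_eq_integral_Ioo,
    ← intervalIntegral.integral_of_le hle, integral_id, mul_comm 2 j, pow_mul]
  rcases eq_or_ne ((b : ℝ) ^ j) 0 with h | h
  · simp [h]
  · field_simp
    ring

lemma haar_eq_sum_indicator (b j m ℓ : ℕ) (x : ℝ) :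
    haar b j m ℓ x =
      ∑ k ∈ range b, (adicInterval b (j + 1) (b * m + k)).indicator (fun _ => bexp b ℓ k) x := by
  refine sum_congr rfl fun k _ => ?_
  simp only [adicInterval, Set.indicator_apply, Set.mem_Ico]
  push_cast
  simp only [div_eq_inv_mul]

lemma sum_range_bexp_eq_zero {b ℓ : ℕ} (hℓ : ¬ b ∣ ℓ) : ∑ k ∈ range b, bexp b ℓ k = 0 := by
  rcases eq_or_ne b 0 with rfl | hb
  · simp
  rw [sum_congr rfl fun k _ => bexp_eq_pow b ℓ k]
  exact geom_sum_eq_zero_of_pow_eq_one (bexp_one_pow_self hb ℓ) (bexp_one_ne_one hb hℓ)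

lemma mul_haar_eq_sum_indicator (f : ℝ → ℂ) (b j m ℓ : ℕ) (x : ℝ) :
    f x * haar b j m ℓ x =
      ∑ k ∈ range b,
        (adicInterval b (j + 1) (b * m + k)).indicator (fun y => f y * bexp b ℓ k) x := by
  simp only [haar_eq_sum_indicator, mul_sum, Set.indicator_mul_right]

lemma integrableOn_mul_haar {f : ℝ → ℂ} {s : Set ℝ} (hf : IntegrableOn f s) (b j m ℓ : ℕ) :
    IntegrableOn (fun x => f x * haar b j m ℓ x) s := by
  simp only [mul_haar_eq_sum_indicator f]
  exact integrable_finsetSum _ fun k _ => (hf.mul_const _).indicator measurableSet_adicInterval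

lemma integral_mul_haar {b j m : ℕ} (hm : m < b ^ j) (ℓ : ℕ) {f : ℝ → ℂ}
    (hf : IntegrableOn f (Set.Ico 0 1)) :
    ∫ x in Set.Ico 0 1, f x * haar b j m ℓ x =
      ∑ k ∈ range b, bexp b ℓ k * ∫ x in adicInterval b (j + 1) (b * m + k), f x := by
  simp only [mul_haar_eq_sum_indicator f]
  rw [integral_finsetSum _ fun k _ => (hf.mul_const _).indicator measurableSet_adicInterval]
  refine sum_congr rfl fun k hk => ?_
  have hsub := (adicInterval_child_subset j m (mem_range.mp hk)).trans (adicInterval_subset_Ico hm)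
  rw [setIntegral_indicator measurableSet_adicInterval, Set.inter_eq_self_of_subset_right hsub,
    integral_mul_const, mul_comm]

lemma integral_mul_haar_eq_zero_of_ae_eq_const {b j m ℓ : ℕ} (hm : m < b ^ j) (hℓ : ¬ b ∣ ℓ)
    {f : ℝ → ℂ} {c : ℂ} (hf : IntegrableOn f (Set.Ico 0 1))
    (hfc : f =ᵐ[volume.restrict (adicInterval b j m)] fun _ => c) :
    ∫ x in Set.Ico 0 1, f x * haar b j m ℓ x = 0 := by
  have hcell : ∀ k ∈ range b, ∫ x in adicInterval b (j + 1) (b * m + k), f x =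
      volume.real (adicInterval b (j + 1) (b * m + k)) • c := fun k hk => by
    rw [← setIntegral_const]
    exact integral_congr_ae
      (ae_restrict_of_ae_restrict_of_subset (adicInterval_child_subset j m (mem_range.mp hk)) hfc)
  rw [integral_mul_haar hm ℓ hf, sum_congr rfl fun k hk => by rw [hcell k hk]]
  simp only [volume_real_adicInterval, ← sum_mul, sum_range_bexp_eq_zero hℓ, zero_mul]

lemma integrableOn_ofReal_Ico : IntegrableOn (fun x : ℝ => (x : ℂ)) (Set.Ico 0 1) :=
  Complex.continuous_ofReal.integrableOn_Icc.mono_set Set.Ico_subset_Icc_self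

lemma integral_ofReal_mul_haar {b j m ℓ : ℕ} (hb : b ≠ 0) (hm : m < b ^ j) (hℓ : ¬ b ∣ ℓ) :
    ∫ x in Set.Ico (0 : ℝ) 1, (x : ℂ) * haar b j m ℓ x =
      1 / ((b : ℂ) ^ (2 * j + 1) * (bexp b ℓ 1 - 1)) := by
  rw [integral_mul_haar hm ℓ integrableOn_ofReal_Ico]
  -- the cell integrals are affine in `k`, and only the `k`-linear part survives summation
  have hsplit : ∀ k ∈ range b, bexp b ℓ k * ∫ x in adicInterval b (j + 1) (b * m + k), (x : ℂ) =
      (2 * b * m + 1) / (2 * (b : ℂ) ^ (2 * (j + 1))) * bexp b ℓ k +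
        1 / (b : ℂ) ^ (2 * (j + 1)) * ((k : ℂ) * bexp b ℓ 1 ^ k) := fun k _ => by
    rw [integral_complex_ofReal (f := fun x => x), integral_id_adicInterval, bexp_eq_pow]
    push_cast
    field_simp
    ring
  rw [sum_congr rfl hsplit, sum_add_distrib, ← mul_sum, ← mul_sum, sum_range_bexp_eq_zero hℓ,
    sum_range_mul_pow_of_pow_eq_one (bexp_one_pow_self hb ℓ) (bexp_one_ne_one hb hℓ)]
  field_simp
  ring

lemma exists_sum_div_pow_mul_pow_eq_natCast {ι : Type*} (S : Finset ι) (c e : ι → ℕ) {b j : ℕ}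
    (hb : b ≠ 0) (he : ∀ i ∈ S, e i ≤ j) :
    ∃ N : ℕ, (∑ i ∈ S, (c i : ℝ) / (b : ℝ) ^ e i) * (b : ℝ) ^ j = N := by
  refine ⟨∑ i ∈ S, c i * b ^ (j - e i), ?_⟩
  rw [sum_mul]
  push_cast
  refine sum_congr rfl fun i hi => ?_
  rw [div_mul_eq_mul_div, mul_div_assoc, div_eq_mul_inv,
    ← pow_sub₀ _ (Nat.cast_ne_zero.mpr hb) (he i hi)]

lemma z1_mul_pow_eq_natCast {b n j : ℕ} (hb : b ≠ 0) (hj : n ≤ j) (t : Fin n → Fin b) :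
    ∃ N : ℕ, z1 b n t * (b : ℝ) ^ j = N :=
  exists_sum_div_pow_mul_pow_eq_natCast _ _ _ hb fun _ _ => by omega

lemma z2_mul_pow_eq_natCast {b n j : ℕ} (hb : b ≠ 0) (hj : n ≤ j) (s : Fin n → ℕ → ℕ)
    (t : Fin n → Fin b) : ∃ N : ℕ, z2 b n s t * (b : ℝ) ^ j = N :=
  exists_sum_div_pow_mul_pow_eq_natCast _ _ _ hb fun i _ => by omega

lemma integrableOn_ite_lt (a : ℝ) :
    IntegrableOn (fun x : ℝ => if a < x then (1 : ℂ) else 0) (Set.Ico 0 1) := by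
  have h : (fun x : ℝ => if a < x then (1 : ℂ) else 0) = (Set.Ioi a).indicator 1 := by
    ext x
    simp [Set.indicator_apply]
  rw [h]
  exact (integrable_const 1).indicator measurableSet_Ioi

lemma integral_ite_lt_mul_haar_eq_zero {b j m ℓ : ℕ} (hm : m < b ^ j) (hℓ : ¬ b ∣ ℓ) {a : ℝ} {N : ℕ}
    (ha : a * (b : ℝ) ^ j = N) :
    ∫ x in Set.Ico 0 1, (if a < x then (1 : ℂ) else 0) * haar b j m ℓ x = 0 := by
  have hbj : (0 : ℝ) < (b : ℝ) ^ j := by exact_mod_cast (by omega : 0 < b ^ j)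
  have ha' : a = N / (b : ℝ) ^ j := by rw [← ha, mul_div_cancel_right₀ _ hbj.ne']
  refine integral_mul_haar_eq_zero_of_ae_eq_const hm hℓ (integrableOn_ite_lt a)
    (c := if N ≤ m then 1 else 0) ?_
  rw [adicInterval, Measure.restrict_congr_set Ioo_ae_eq_Ico.symm]
  refine ae_restrict_of_forall_mem measurableSet_Ioo fun x hx => ?_
  by_cases hN : N ≤ m
  · have : a < x := ha' ▸ lt_of_le_of_lt (by gcongr) hx.1
    simp [this, hN]
  · have : x ≤ a := ha' ▸ hx.2.le.trans (by gcongr; exact_mod_cast (by omega : m + 1 ≤ N))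
    simp [not_lt.mpr this, hN]

lemma integral_integral_sum_mul {α β ι 𝕜 : Type*} [RCLike 𝕜] [MeasurableSpace α]
    [MeasurableSpace β] {μ : Measure α} {ν : Measure β} (S : Finset ι) {F : ι → α → 𝕜}
    {G : ι → β → 𝕜} (hF : ∀ i ∈ S, Integrable (F i) μ) (hG : ∀ i ∈ S, Integrable (G i) ν) :
    ∫ x, ∫ y, ∑ i ∈ S, F i x * G i y ∂ν ∂μ = ∑ i ∈ S, (∫ x, F i x ∂μ) * ∫ y, G i y ∂ν := by
  have hinner : ∀ x, ∫ y, ∑ i ∈ S, F i x * G i y ∂ν = ∑ i ∈ S, F i x * ∫ y, G i y ∂ν := fun x => by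
    rw [integral_finsetSum _ fun i hi => (hG i hi).const_mul _]
    exact sum_congr rfl fun i _ => integral_const_mul _ _
  simp only [hinner]
  rw [integral_finsetSum _ fun i hi => (hF i hi).mul_const _]
  exact sum_congr rfl fun i _ => integral_mul_const _ _

lemma integral_integral_disc_mul_haar (b n : ℕ) (s : Fin n → ℕ → ℕ) (j₁ m₁ ℓ₁ j₂ m₂ ℓ₂ : ℕ) :
    ∫ x₁ in Set.Ico (0 : ℝ) 1, ∫ x₂ in Set.Ico (0 : ℝ) 1,
        ((disc b n s x₁ x₂ : ℝ) : ℂ) * haar b j₁ m₁ ℓ₁ x₁ * haar b j₂ m₂ ℓ₂ x₂ =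
      (b : ℂ) ^ (-(n : ℤ)) * (∑ t : Fin n → Fin b,
          (∫ x₁ in Set.Ico 0 1, (if z1 b n t < x₁ then (1 : ℂ) else 0) * haar b j₁ m₁ ℓ₁ x₁) *
            ∫ x₂ in Set.Ico 0 1, (if z2 b n s t < x₂ then (1 : ℂ) else 0) * haar b j₂ m₂ ℓ₂ x₂)
        - (∫ x₁ in Set.Ico (0 : ℝ) 1, (x₁ : ℂ) * haar b j₁ m₁ ℓ₁ x₁) *
            ∫ x₂ in Set.Ico (0 : ℝ) 1, (x₂ : ℂ) * haar b j₂ m₂ ℓ₂ x₂ := by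
  set h₁ := haar b j₁ m₁ ℓ₁
  set h₂ := haar b j₂ m₂ ℓ₂
  -- the summand `none` carries the term `-x₁ x₂` of `disc`
  let F : Option (Fin n → Fin b) → ℝ → ℂ := fun o x => o.elim (-(x * h₁ x))
    fun t => (b : ℂ) ^ (-(n : ℤ)) * ((if z1 b n t < x then 1 else 0) * h₁ x)
  let G : Option (Fin n → Fin b) → ℝ → ℂ := fun o y => o.elim (y * h₂ y)
    fun t => (if z2 b n s t < y then 1 else 0) * h₂ y
  have hsplit : ∀ x₁ x₂, ((disc b n s x₁ x₂ : ℝ) : ℂ) * h₁ x₁ * h₂ x₂ = ∑ o, F o x₁ * G o x₂ := by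
    intro x₁ x₂
    simp only [disc, Fintype.sum_option, F, G, Option.elim]
    push_cast [apply_ite Complex.ofReal, zpow_neg, zpow_natCast]
    rw [mul_sum, sub_mul, sub_mul, sum_mul, sum_mul, neg_mul, neg_add_eq_sub]
    congr 1
    · exact sum_congr rfl fun t _ => by ring
    · ring
  have hF : ∀ o ∈ univ, IntegrableOn (F o) (Set.Ico 0 1) := by
    rintro (_ | t) -
    · exact (integrableOn_mul_haar integrableOn_ofReal_Ico b j₁ m₁ ℓ₁).neg
    · exact (integrableOn_mul_haar (integrableOn_ite_lt _) b j₁ m₁ ℓ₁).const_mul _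
  have hG : ∀ o ∈ univ, IntegrableOn (G o) (Set.Ico 0 1) := by
    rintro (_ | t) -
    · exact integrableOn_mul_haar integrableOn_ofReal_Ico b j₂ m₂ ℓ₂
    · exact integrableOn_mul_haar (integrableOn_ite_lt _) b j₂ m₂ ℓ₂
  simp only [hsplit]
  rw [integral_integral_sum_mul univ hF hG, Fintype.sum_option]
  simp only [F, G, Option.elim, integral_neg, integral_const_mul]
  rw [neg_mul, neg_add_eq_sub, mul_sum]
  simp only [mul_assoc]

theorem abs_haar_coeff_disc_large_general (b n : ℕ) (hb : 2 ≤ b)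
    (s : Fin n → ℕ → ℕ)
    (j₁ j₂ m₁ m₂ ℓ₁ ℓ₂ : ℕ) (hj : n ≤ j₁ ∨ n ≤ j₂)
    (hm₁ : m₁ < b ^ j₁) (hm₂ : m₂ < b ^ j₂)
    (hℓ₁ : 1 ≤ ℓ₁) (hℓ₁' : ℓ₁ ≤ b - 1) (hℓ₂ : 1 ≤ ℓ₂) (hℓ₂' : ℓ₂ ≤ b - 1) :
    ‖∫ x₁ in Set.Ico (0:ℝ) 1, ∫ x₂ in Set.Ico (0:ℝ) 1,
        ((disc b n s x₁ x₂ : ℝ) : ℂ) * haar b j₁ m₁ ℓ₁ x₁ * haar b j₂ m₂ ℓ₂ x₂‖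
      = (b:ℝ) ^ (-2*(j₁:ℤ) - 2*(j₂:ℤ) - 2) /
          (‖Complex.exp (2 * Real.pi * Complex.I * ℓ₁ / b) - 1‖ *
           ‖Complex.exp (2 * Real.pi * Complex.I * ℓ₂ / b) - 1‖) := by
  have hb0 : b ≠ 0 := by omega
  have hd₁ : ¬ b ∣ ℓ₁ := Nat.not_dvd_of_pos_of_lt hℓ₁ (by omega)
  have hd₂ : ¬ b ∣ ℓ₂ := Nat.not_dvd_of_pos_of_lt hℓ₂ (by omega)
  have hvanish : ∀ t : Fin n → Fin b,
      (∫ x₁ in Set.Ico 0 1, (if z1 b n t < x₁ then (1 : ℂ) else 0) * haar b j₁ m₁ ℓ₁ x₁) *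
        ∫ x₂ in Set.Ico 0 1, (if z2 b n s t < x₂ then (1 : ℂ) else 0) * haar b j₂ m₂ ℓ₂ x₂ = 0 := by
    intro t
    rcases hj with hj | hj
    · obtain ⟨N, hN⟩ := z1_mul_pow_eq_natCast hb0 hj t
      rw [integral_ite_lt_mul_haar_eq_zero hm₁ hd₁ hN, zero_mul]
    · obtain ⟨N, hN⟩ := z2_mul_pow_eq_natCast hb0 hj s t
      rw [integral_ite_lt_mul_haar_eq_zero hm₂ hd₂ hN, mul_zero]
  have hpow : (b : ℝ) ^ (-2 * (j₁ : ℤ) - 2 * (j₂ : ℤ) - 2) =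
      1 / ((b : ℝ) ^ (2 * j₁ + 1) * (b : ℝ) ^ (2 * j₂ + 1)) := by
    rw [← pow_add, one_div, ← zpow_natCast, ← zpow_neg]
    push_cast
    ring_nf
  rw [integral_integral_disc_mul_haar, sum_eq_zero fun t _ => hvanish t, mul_zero, zero_sub,
    norm_neg, integral_ofReal_mul_haar hb0 hm₁ hd₁, integral_ofReal_mul_haar hb0 hm₂ hd₂,
    bexp_one, bexp_one, hpow]
  simp only [norm_mul, norm_div, norm_one, norm_pow, Complex.norm_natCast]
  ring

/-- Proposition 5.1 (iii): for `j₁ ≥ n` or `j₂ ≥ n`, the `b`-adic Haar coefficient of the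
discrepancy function has absolute value `b^{−2j₁−2j₂−2}/(|e(ℓ₁)−1||e(ℓ₂)−1|)`. -/
theorem abs_haar_coeff_disc_large (b n : ℕ) (hb : 2 ≤ b) (hn : 1 ≤ n)
    (s : Fin n → ℕ → ℕ) (hs : IsDigitMaps b n s)
    (j₁ j₂ m₁ m₂ ℓ₁ ℓ₂ : ℕ) (hj : n ≤ j₁ ∨ n ≤ j₂)
    (hm₁ : m₁ < b ^ j₁) (hm₂ : m₂ < b ^ j₂)
    (hℓ₁ : 1 ≤ ℓ₁) (hℓ₁' : ℓ₁ ≤ b - 1) (hℓ₂ : 1 ≤ ℓ₂) (hℓ₂' : ℓ₂ ≤ b - 1) :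
    ‖∫ x₁ in Set.Ico (0:ℝ) 1, ∫ x₂ in Set.Ico (0:ℝ) 1,
        ((disc b n s x₁ x₂ : ℝ) : ℂ) * haar b j₁ m₁ ℓ₁ x₁ * haar b j₂ m₂ ℓ₂ x₂‖
      = (b:ℝ) ^ (-2*(j₁:ℤ) - 2*(j₂:ℤ) - 2) /
          (‖Complex.exp (2 * Real.pi * Complex.I * ℓ₁ / b) - 1‖ *
           ‖Complex.exp (2 * Real.pi * Complex.I * ℓ₂ / b) - 1‖) :=
  abs_haar_coeff_disc_large_general b n hb s j₁ j₂ m₁ m₂ ℓ₁ ℓ₂ hj hm₁ hm₂ hℓ₁ hℓ₁' hℓ₂ hℓ₂'
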